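/- arXiv:2205.14223 — 2 statements merged into one kernel-verified Lean document; each statement's English description precedes it below -/
import Mathlib

section
/- Let k ≥ 2, let F ∈ Q_1([0,1]^2)^2 with Jacobian J, and let q ∈ Q_{k-1}([0,1]^2). Then each component of cof(J(x)) ∇q(x) is a polynomial in Q_{k-1}([0,1]^2), i.e. of degree at most k-1 in each variable. -/
open MvPolynomial

/-- `p ∈ Q_m`: polynomial of degree at most `m` in each of the two variables. -/
def memQ2 (m : ℕ) (p : MvPolynomial (Fin 2) ℝ) : Prop :=
  ∀ i : Fin 2, degreeOf i p ≤ m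

/-- The cofactor matrix of the (polynomial) Jacobian of `F : [0,1]² → ℝ²`,
`cof(J) = [[∂₂F₂, -∂₁F₂], [-∂₂F₁, ∂₁F₁]]`. -/
noncomputable def cofJ2 (F : Fin 2 → MvPolynomial (Fin 2) ℝ) :
    Matrix (Fin 2) (Fin 2) (MvPolynomial (Fin 2) ℝ) :=
  !![pderiv 1 (F 1), -pderiv 0 (F 1); -pderiv 1 (F 0), pderiv 0 (F 0)]

/-! Each entry of `cof(J) ∇q` is `± ∂_a G · ∂_j q` summed over two pairs `a ≠ j`, with `G` a
component of `F`. In two variables every variable `x_m` is `x_a` or `x_j`. If `m = a`, then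
`∂_m G` is free of `x_m` because `G` is affine in `x_m`, so the product has `x_m`-degree at most
that of `q`. If `m = j`, differentiating `q` in `x_m` lowers its `x_m`-degree by one, which
makes up for the degree `≤ 1` of `∂_a G`. -/

namespace MvPolynomial

variable {σ R : Type*} [CommRing R]

theorem add_single_mem_support_of_mem_support_pderiv {i : σ} {p : MvPolynomial σ R}
    {m : σ →₀ ℕ} (hm : m ∈ (pderiv i p).support) : m + Finsupp.single i 1 ∈ p.support := by
  rw [mem_support_iff, coeff_pderiv] at hm
  exact mem_support_iff.2 (left_ne_zero_of_mul hm)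

theorem degreeOf_pderiv_le (i j : σ) (p : MvPolynomial σ R) :
    degreeOf i (pderiv j p) ≤ degreeOf i p := by
  classical
  refine degreeOf_le_iff.2 fun m hm => le_trans ?_
    (monomial_le_degreeOf i (add_single_mem_support_of_mem_support_pderiv hm))
  simp

theorem degreeOf_pderiv_self_le (i : σ) (p : MvPolynomial σ R) :
    degreeOf i (pderiv i p) ≤ degreeOf i p - 1 := by
  refine degreeOf_le_iff.2 fun m hm => Nat.le_sub_one_of_lt ?_
  have := monomial_le_degreeOf i (add_single_mem_support_of_mem_support_pderiv hm)
  simpa using this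

theorem degreeOf_mul_pderiv_self_le (i : σ) (p q : MvPolynomial σ R) :
    degreeOf i (p * pderiv i q) ≤ degreeOf i p + degreeOf i q - 1 := by
  by_cases hq : degreeOf i q = 0
  · rw [pderiv_eq_zero_of_notMem_vars (mt mem_vars_iff_degreeOf_ne_zero.1 (not_not.2 hq)),
      mul_zero, degreeOf_zero]
    exact Nat.zero_le _
  · have := degreeOf_pderiv_self_le i q
    have := degreeOf_mul_le i p (pderiv i q)
    omega

end MvPolynomial

theorem memQ2.neg {n : ℕ} {p : MvPolynomial (Fin 2) ℝ} (hp : memQ2 n p) : memQ2 n (-p) :=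
  fun i => (degreeOf_neg i p).trans_le (hp i)

theorem memQ2.add {n : ℕ} {p q : MvPolynomial (Fin 2) ℝ} (hp : memQ2 n p) (hq : memQ2 n q) :
    memQ2 n (p + q) :=
  fun i => (degreeOf_add_le i p q).trans (max_le (hp i) (hq i))

theorem memQ2_pderiv_mul_pderiv {a j : Fin 2} (haj : a ≠ j) {n : ℕ}
    {G q : MvPolynomial (Fin 2) ℝ} (hG : memQ2 1 G) (hq : memQ2 n q) :
    memQ2 n (pderiv a G * pderiv j q) := by
  intro m
  obtain rfl | rfl : m = a ∨ m = j := by omega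
  · calc degreeOf m (pderiv m G * pderiv j q)
        ≤ degreeOf m (pderiv m G) + degreeOf m (pderiv j q) := degreeOf_mul_le m _ _
      _ ≤ (1 - 1) + n := add_le_add ((degreeOf_pderiv_self_le m G).trans (by have := hG m; omega))
          ((degreeOf_pderiv_le m j q).trans (hq m))
      _ = n := by simp
  · calc degreeOf m (pderiv a G * pderiv m q)
        ≤ degreeOf m (pderiv a G) + degreeOf m q - 1 := degreeOf_mul_pderiv_self_le m _ _
      _ ≤ 1 + n - 1 := Nat.sub_le_sub_right
          (add_le_add ((degreeOf_pderiv_le m a G).trans (hG m)) (hq m)) 1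
      _ = n := by omega

theorem stmt_5_general (k : ℕ)
    (F : Fin 2 → MvPolynomial (Fin 2) ℝ)
    (hF : ∀ i j : Fin 2, degreeOf j (F i) ≤ 1)
    (q : MvPolynomial (Fin 2) ℝ) (hq : memQ2 (k - 1) q) :
    ∀ i : Fin 2, memQ2 (k - 1) (∑ j : Fin 2, cofJ2 F i j * pderiv j q) := by
  intro i
  have hterm : ∀ j, memQ2 (k - 1) (cofJ2 F i j * pderiv j q) := by
    intro j
    fin_cases i <;> fin_cases j <;>
      simp only [cofJ2, Fin.isValue, Fin.zero_eta, Fin.mk_one, Matrix.of_apply, Matrix.cons_val',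
        Matrix.cons_val_zero, Matrix.cons_val_one, Matrix.cons_val_fin_one, neg_mul] <;>
      (try apply memQ2.neg) <;>
      exact memQ2_pderiv_mul_pderiv (by decide) (hF _) hq
  rw [Fin.sum_univ_two]
  exact (hterm 0).add (hterm 1)

theorem stmt_5 (k : ℕ) (hk : 2 ≤ k)
    (F : Fin 2 → MvPolynomial (Fin 2) ℝ)
    (hF : ∀ i j : Fin 2, degreeOf j (F i) ≤ 1)
    (q : MvPolynomial (Fin 2) ℝ) (hq : memQ2 (k - 1) q) :
    ∀ i : Fin 2, memQ2 (k - 1) (∑ j : Fin 2, cofJ2 F i j * pderiv j q) :=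
  stmt_5_general k F hF q hq
end

section
/- Let F be the trilinear map interpolating the eight nodes a^(1)=(0,0,0), a^(2)=(1,0,0), a^(3)=(3/4,3/4,0), a^(4)=(0,1,0), a^(5)=(0,0,1), a^(6)=(1/2,0,1), a^(7)=(3/8,3/8,1), a^(8)=(0,1/2,1). Let v(x) = 64 x1(1−x1)x2(1−x2)x3(1−x3)·e3 and q(x) = x1. Then v(x) · (∂_2 F(x) × ∂_3 F(x)) = 4 x1^2(1−x1)(x1−4) x2(1−x2) x3(1−x3)(x3−2), which is not in Q_3([0,1]^3) (it has degree 4 in x1). -/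
open MvPolynomial Matrix

/-- `p ∈ Q_m`: polynomial of degree at most `m` in each of the three variables. -/
def memQ3 (m : ℕ) (p : MvPolynomial (Fin 3) ℝ) : Prop :=
  ∀ i : Fin 3, degreeOf i p ≤ m

/-- The trilinear interpolant of eight nodes `a 0, …, a 7` placed at the vertices
`(0,0,0),(1,0,0),(1,1,0),(0,1,0),(0,0,1),(1,0,1),(1,1,1),(0,1,1)` of the unit cube. -/
noncomputable def trilinear (a : Fin 8 → Fin 3 → ℝ) (i : Fin 3) :
    MvPolynomial (Fin 3) ℝ :=
  (1 - X 0) * (1 - X 1) * (1 - X 2) * C (a 0 i) +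
  X 0 * (1 - X 1) * (1 - X 2) * C (a 1 i) +
  X 0 * X 1 * (1 - X 2) * C (a 2 i) +
  (1 - X 0) * X 1 * (1 - X 2) * C (a 3 i) +
  (1 - X 0) * (1 - X 1) * X 2 * C (a 4 i) +
  X 0 * (1 - X 1) * X 2 * C (a 5 i) +
  X 0 * X 1 * X 2 * C (a 6 i) +
  (1 - X 0) * X 1 * X 2 * C (a 7 i)

/-- The nodes of the counterexample hexahedron. -/
noncomputable def exNodes : Fin 8 → Fin 3 → ℝ :=
  ![![0, 0, 0], ![1, 0, 0], ![3/4, 3/4, 0], ![0, 1, 0],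
    ![0, 0, 1], ![1/2, 0, 1], ![3/8, 3/8, 1], ![0, 1/2, 1]]

/-- `v(x) = 64 x₁(1-x₁)x₂(1-x₂)x₃(1-x₃) e₃ ∈ Q₂([0,1]³)³`. -/
noncomputable def exV : Fin 3 → MvPolynomial (Fin 3) ℝ :=
  ![0, 0, 64 * (X 0 * (1 - X 0) * (X 1 * (1 - X 1)) * (X 2 * (1 - X 2)))]

/-! Since `v` is a multiple of `e₃`, only the third component of `∂₂F × ∂₃F` enters, and it
involves only the first two components of `F`, whose derivatives are bilinear interpolants of
edge differences of the nodes. For the degree in `x₁`, view the product as a polynomial in `X 0`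
over `ℝ[X 1, X 2]`: it is a quartic in `X 0` times a nonzero constant. -/

lemma dotProduct_cross_of_e3 {R : Type*} [CommRing R] (w : R) (a b : Fin 3 → R) :
    ![0, 0, w] ⬝ᵥ (a ⨯₃ b) = w * (a 0 * b 1 - a 1 * b 0) := by
  simp [dotProduct, Fin.sum_univ_three, cross_apply]

lemma pderiv_one_trilinear (a : Fin 8 → Fin 3 → ℝ) (i : Fin 3) :
    pderiv 1 (trilinear a i) =
      (1 - X 0) * (1 - X 2) * C (a 3 i - a 0 i) + X 0 * (1 - X 2) * C (a 2 i - a 1 i) +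
      (1 - X 0) * X 2 * C (a 7 i - a 4 i) + X 0 * X 2 * C (a 6 i - a 5 i) := by
  simp only [trilinear, map_add, map_sub, Derivation.leibniz, Derivation.map_one_eq_zero, pderiv_X,
    derivation_C, Pi.single_apply, Fin.reduceEq, if_true, if_false, smul_eq_mul]
  ring

lemma pderiv_two_trilinear (a : Fin 8 → Fin 3 → ℝ) (i : Fin 3) :
    pderiv 2 (trilinear a i) =
      (1 - X 0) * (1 - X 1) * C (a 4 i - a 0 i) + X 0 * (1 - X 1) * C (a 5 i - a 1 i) +
      X 0 * X 1 * C (a 6 i - a 2 i) + (1 - X 0) * X 1 * C (a 7 i - a 3 i) := by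
  simp only [trilinear, map_add, map_sub, Derivation.leibniz, Derivation.map_one_eq_zero, pderiv_X,
    derivation_C, Pi.single_apply, Fin.reduceEq, if_true, if_false, smul_eq_mul]
  ring

lemma degreeOf_zero_of_finSuccEquiv_eq_mul_C {R : Type*} [CommRing R] [IsDomain R] {n : ℕ}
    {f : MvPolynomial (Fin (n + 1)) R} {p : Polynomial (MvPolynomial (Fin n) R)}
    {g : MvPolynomial (Fin n) R} (hf : finSuccEquiv R n f = p * Polynomial.C g) (hg : g ≠ 0) :
    degreeOf 0 f = p.natDegree := by
  rw [← natDegree_finSuccEquiv, hf, Polynomial.natDegree_mul_C hg]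

lemma exV_dotProduct_cross_pderiv :
    exV ⬝ᵥ ((fun l => pderiv 1 (trilinear exNodes l)) ⨯₃
        (fun l => pderiv 2 (trilinear exNodes l))) =
      4 * X 0 ^ 2 * (1 - X 0) * (X 0 - 4) * (X 1 * (1 - X 1)) * (X 2 * (1 - X 2)) * (X 2 - 2) := by
  rw [show exV = ![0, 0, _] from rfl, dotProduct_cross_of_e3]
  simp only [pderiv_one_trilinear, pderiv_two_trilinear]
  apply MvPolynomial.funext
  intro x
  simp only [exNodes, cons_val', cons_val_zero, cons_val_one, cons_val, cons_val_fin_one, map_add,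
    map_sub, map_mul, map_one, map_pow, eval_ofNat, eval_X, eval_C]
  ring

lemma degreeOf_zero_tripleProduct :
    degreeOf 0 (4 * X 0 ^ 2 * (1 - X 0) * (X 0 - 4) * (X 1 * (1 - X 1)) * (X 2 * (1 - X 2)) *
      (X 2 - 2) : MvPolynomial (Fin 3) ℝ) = 4 := by
  have hg : (X 0 * (1 - X 0) * (X 1 * (1 - X 1)) * (X 1 - 2) : MvPolynomial (Fin 2) ℝ) ≠ 0 := by
    intro h
    have := congrArg (eval fun _ => (1 / 2 : ℝ)) h
    norm_num at this
  rw [degreeOf_zero_of_finSuccEquiv_eq_mul_C (p := 4 * .X ^ 2 * (1 - .X) * (.X - 4)) _ hg]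
  · compute_degree!
  · rw [← Fin.succ_zero_eq_one, ← Fin.succ_one_eq_two]
    simp only [map_mul, map_sub, map_one, map_ofNat, map_pow, finSuccEquiv_X_zero,
      finSuccEquiv_X_succ]
    ring

theorem stmt_11 :
    (∑ i : Fin 3, exV i *
        (((fun l => pderiv 1 (trilinear exNodes l)) ⨯₃
          (fun l => pderiv 2 (trilinear exNodes l))) i))
      = 4 * (X 0) ^ 2 * (1 - X 0) * (X 0 - 4) * (X 1 * (1 - X 1)) *
          (X 2 * (1 - X 2)) * (X 2 - 2) ∧
    degreeOf 0 (∑ i : Fin 3, exV i *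
        (((fun l => pderiv 1 (trilinear exNodes l)) ⨯₃
          (fun l => pderiv 2 (trilinear exNodes l))) i)) = 4 ∧
    ¬ memQ3 3 (∑ i : Fin 3, exV i *
        (((fun l => pderiv 1 (trilinear exNodes l)) ⨯₃
          (fun l => pderiv 2 (trilinear exNodes l))) i)) := by
  simp only [← dotProduct.eq_1]
  rw [exV_dotProduct_cross_pderiv]
  refine ⟨rfl, degreeOf_zero_tripleProduct, fun hQ => ?_⟩
  have := degreeOf_zero_tripleProduct ▸ hQ 0
  omega
end
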